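/- Let A⊗̄_R B be an alternative twisted tensor product of algebras, σ_A : A → A and σ_B : B → B involutions, and define σ̄ : A⊗B → A⊗B by σ̄ := R∘(σ_B⊗σ_A)∘τ_{A,B}, i.e., σ̄(a⊗b) = σ_A(a)_R ⊗ σ_B(b)_R. Assume: R satisfies the braid relation (id_A⊗τ_{B,B})∘(R⊗id_B)∘(id_B⊗R) = (R⊗id_B)∘(id_B⊗R)∘(τ_{B,B}⊗id_A); R(B⊗A₀) ⊆ A₀⊗B; σ_A(A₀) ⊆ A₀; and σ̄² = id_{A⊗B}. Then σ̄ is an involution of the algebra A⊗̄_R B, i.e., an algebra antiautomorphism of A⊗̄_R B whose square is the identity. -/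

import Mathlib

open TensorProduct LinearMap

section TwistPreamble

variable (K : Type*) [Field K]
variable (A : Type*) [NonAssocRing A] [Module K A] [SMulCommClass K A A] [IsScalarTower K A A]
variable (B : Type*) [NonAssocRing B] [Module K B] [SMulCommClass K B B] [IsScalarTower K B B]

/-- Sweedler helper: sends `Σ aR ⊗ bR` in `A ⊗ B` to `Σ (aR * a'_r) ⊗ (bR)_r`,
where `R((bR) ⊗ a') = a'_r ⊗ (bR)_r`. -/
noncomputable def attpRmul (R : B ⊗[K] A →ₗ[K] A ⊗[K] B) (a' : A) :
    A ⊗[K] B →ₗ[K] A ⊗[K] B :=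
  (rTensor B (LinearMap.mul' K A)) ∘ₗ (TensorProduct.assoc K A A B).symm.toLinearMap ∘ₗ
    (lTensor A (R ∘ₗ (TensorProduct.mk K B A).flip a'))

/-- Sweedler helper: sends `Σ aR ⊗ b'R` in `A ⊗ B` to `Σ (aR)_r ⊗ (b'R * b_r)`,
where `R(b ⊗ aR) = (aR)_r ⊗ b_r`. -/
noncomputable def attpLmul (R : B ⊗[K] A →ₗ[K] A ⊗[K] B) (b : B) :
    A ⊗[K] B →ₗ[K] A ⊗[K] B :=
  (lTensor A ((LinearMap.mul' K B) ∘ₗ (TensorProduct.comm K B B).toLinearMap)) ∘ₗ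
    (TensorProduct.assoc K A B B).toLinearMap ∘ₗ
    (rTensor B (R ∘ₗ (TensorProduct.mk K B A) b))

/-- `R : B ⊗ A → A ⊗ B` is an alternative twisting map w.r.t. the decomposition
`A = K·1_A ⊕ A₀`. -/
def IsAltTwistingMap (A₀ : Submodule K A) (R : B ⊗[K] A →ₗ[K] A ⊗[K] B) : Prop :=
  (∀ a : A, R ((1 : B) ⊗ₜ[K] a) = a ⊗ₜ[K] (1 : B)) ∧
  (∀ b : B, R (b ⊗ₜ[K] (1 : A)) = (1 : A) ⊗ₜ[K] b) ∧
  (∀ (a a' : A) (b : B), R (b ⊗ₜ[K] (a * a')) = attpRmul K A B R a' (R (b ⊗ₜ[K] a))) ∧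
  (∀ a ∈ A₀, ∀ b b' : B, R ((b * b') ⊗ₜ[K] a) = attpLmul K A B R b (R (b' ⊗ₜ[K] a)))

/-- `m` is the multiplication of the alternative twisted tensor product `A ⊗̄_R B`:
`(1⊗b)(a'⊗b') = a'_R ⊗ b_R b'` and, for `a ∈ A₀`, `(a⊗b)(a'⊗b') = a a'_R ⊗ b' b_R`. -/
def IsAltMul (A₀ : Submodule K A) (R : B ⊗[K] A →ₗ[K] A ⊗[K] B)
    (m : A ⊗[K] B →ₗ[K] A ⊗[K] B →ₗ[K] A ⊗[K] B) : Prop :=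
  (∀ (b : B) (a' : A) (b' : B),
      m ((1 : A) ⊗ₜ[K] b) (a' ⊗ₜ[K] b') = (lTensor A (mulRight K b')) (R (b ⊗ₜ[K] a'))) ∧
  (∀ a ∈ A₀, ∀ (b : B) (a' : A) (b' : B),
      m (a ⊗ₜ[K] b) (a' ⊗ₜ[K] b') =
        (TensorProduct.map (mulLeft K a) (mulLeft K b')) (R (b ⊗ₜ[K] a')))

end TwistPreamble

section BraidPreamble

variable (K : Type*) [Field K]
variable (A : Type*) [NonAssocRing A] [Module K A] [SMulCommClass K A A] [IsScalarTower K A A]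
variable (B : Type*) [NonAssocRing B] [Module K B] [SMulCommClass K B B] [IsScalarTower K B B]

/-- The left-hand side `(id_A ⊗ τ_{B,B}) ∘ (R ⊗ id_B) ∘ (id_B ⊗ R)` of the braid
relation, as a map `B ⊗ (B ⊗ A) → A ⊗ (B ⊗ B)`. -/
noncomputable def braidL (R : B ⊗[K] A →ₗ[K] A ⊗[K] B) :
    B ⊗[K] (B ⊗[K] A) →ₗ[K] A ⊗[K] (B ⊗[K] B) :=
  (lTensor A (TensorProduct.comm K B B).toLinearMap) ∘ₗ
    (TensorProduct.assoc K A B B).toLinearMap ∘ₗ (rTensor B R) ∘ₗ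
    (TensorProduct.assoc K B A B).symm.toLinearMap ∘ₗ (lTensor B R)

/-- The right-hand side `(R ⊗ id_B) ∘ (id_B ⊗ R) ∘ (τ_{B,B} ⊗ id_A)` of the braid
relation, as a map `B ⊗ (B ⊗ A) → A ⊗ (B ⊗ B)`. -/
noncomputable def braidR (R : B ⊗[K] A →ₗ[K] A ⊗[K] B) :
    B ⊗[K] (B ⊗[K] A) →ₗ[K] A ⊗[K] (B ⊗[K] B) :=
  (TensorProduct.assoc K A B B).toLinearMap ∘ₗ (rTensor B R) ∘ₗ
    (TensorProduct.assoc K B A B).symm.toLinearMap ∘ₗ (lTensor B R) ∘ₗ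
    (TensorProduct.assoc K B B A).toLinearMap ∘ₗ
    (rTensor A (TensorProduct.comm K B B).toLinearMap) ∘ₗ
    (TensorProduct.assoc K B B A).symm.toLinearMap

end BraidPreamble

/-- The map `σ̄ := R ∘ (σ_B ⊗ σ_A) ∘ τ_{A,B} : A ⊗ B → A ⊗ B`,
i.e. `σ̄(a⊗b) = σ_A(a)_R ⊗ σ_B(b)_R`. -/
noncomputable def liftedInvol (K : Type*) [Field K]
    (A : Type*) [NonAssocRing A] [Module K A] [SMulCommClass K A A] [IsScalarTower K A A]
    (B : Type*) [NonAssocRing B] [Module K B] [SMulCommClass K B B] [IsScalarTower K B B]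
    (R : B ⊗[K] A →ₗ[K] A ⊗[K] B) (σA : A →ₗ[K] A) (σB : B →ₗ[K] B) :
    A ⊗[K] B →ₗ[K] A ⊗[K] B :=
  R ∘ₗ (TensorProduct.map σB σA) ∘ₗ (TensorProduct.comm K A B).toLinearMap

/-! Since `R(B ⊗ A₀) ⊆ A₀ ⊗ B`, a product of pure tensors with left factors in `A₀` factors as
`(a ⊗ b)(a' ⊗ b') = (a ⊗ 1)·(R(b ⊗ a')·(1 ⊗ b'))`, so by linearity and `A = K·1 ⊕ A₀` it is
enough that `σ̄` reverses products with a right factor `1 ⊗ b'` or `a' ⊗ 1` (`a' ∈ A₀`). For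
`1 ⊗ b'` this is the braid relation, for `a' ⊗ 1` the twisting axiom for `R(b ⊗ a a')`; since
`σ̄` is an involution, the same then holds with these elements as left factors. -/

section Generic

variable {K M N : Type*} [CommSemiring K] [AddCommMonoid M] [Module K M] [AddCommMonoid N]
  [Module K N]

theorem TensorProduct.induction_on_codisjoint {e : M} {M₀ : Submodule K M}
    (h : Codisjoint (K ∙ e) M₀) {motive : M ⊗[K] N → Prop}
    (tmul_left : ∀ n : N, motive (e ⊗ₜ[K] n))
    (tmul_mem : ∀ z ∈ M₀, ∀ n : N, motive (z ⊗ₜ[K] n))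
    (add : ∀ x y, motive x → motive y → motive (x + y)) (x : M ⊗[K] N) : motive x := by
  induction x using TensorProduct.induction_on with
  | zero => simpa using tmul_left 0
  | add x y hx hy => exact add x y hx hy
  | tmul m n =>
    obtain ⟨y, hy, z, hz, rfl⟩ := Submodule.mem_sup.mp (h.eq_top ▸ Submodule.mem_top : m ∈ _)
    obtain ⟨k, rfl⟩ := Submodule.mem_span_singleton.mp hy
    rw [add_tmul, smul_tmul]
    exact add _ _ (tmul_left _) (tmul_mem z hz n)

theorem mem_range_rTensor_of_map_le {M₀ : Submodule K M} {R : N ⊗[K] M →ₗ[K] M ⊗[K] N}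
    (hR0 : Submodule.map R (LinearMap.range (lTensor N M₀.subtype)) ≤
      LinearMap.range (rTensor N M₀.subtype))
    (n : N) {z : M} (hz : z ∈ M₀) :
    R (n ⊗ₜ[K] z) ∈ LinearMap.range (rTensor N M₀.subtype) :=
  hR0 (Submodule.mem_map_of_mem ⟨n ⊗ₜ[K] (⟨z, hz⟩ : M₀), rfl⟩)

theorem Function.Involutive.map_mul_left_of_map_mul_right {X : Type*} {S : X → X}
    (hS : Function.Involutive S) (mul : X → X → X) (c : X)
    (h : ∀ x, S (mul x c) = mul (S c) (S x)) (y : X) :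
    S (mul (S c) y) = mul (S y) (S (S c)) := by
  rw [hS c, ← hS (mul (S y) c), h, hS]

end Generic

section AltTwisted

variable {K : Type*} [Field K]
variable {A : Type*} [NonAssocRing A] [Module K A] {B : Type*} [NonAssocRing B] [Module K B]
variable {A₀ : Submodule K A} {R : B ⊗[K] A →ₗ[K] A ⊗[K] B}
variable {m : A ⊗[K] B →ₗ[K] A ⊗[K] B →ₗ[K] A ⊗[K] B}

theorem attpRmul_tmul [SMulCommClass K A A] [IsScalarTower K A A] (a' : A) (c : A) (d : B) :
    attpRmul K A B R a' (c ⊗ₜ[K] d) = rTensor B (mulLeft K c) (R (d ⊗ₜ[K] a')) := by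
  simp only [attpRmul, coe_comp, Function.comp_apply, lTensor_tmul, LinearEquiv.coe_coe,
    flip_apply, mk_apply]
  induction R (d ⊗ₜ[K] a') using TensorProduct.induction_on with
  | zero => simp
  | tmul c' d' => simp [mul'_apply]
  | add u v hu hv => simp only [tmul_add, map_add, hu, hv]

variable [SMulCommClass K B B] [IsScalarTower K B B]

theorem attpLmul_tmul (b : B) (e : A) (f : B) :
    attpLmul K A B R b (e ⊗ₜ[K] f) = lTensor A (mulLeft K f) (R (b ⊗ₜ[K] e)) := by
  simp only [attpLmul, coe_comp, Function.comp_apply, rTensor_tmul, LinearEquiv.coe_coe,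
    mk_apply]
  induction R (b ⊗ₜ[K] e) using TensorProduct.induction_on with
  | zero => simp
  | tmul c d => simp [mul'_apply]
  | add u v hu hv => simp only [add_tmul, map_add, hu, hv]

theorem lTensor_mul'_braidL_tmul (b₁ b₂ : B) (a : A) :
    lTensor A (mul' K B) (braidL K A B R (b₁ ⊗ₜ[K] (b₂ ⊗ₜ[K] a))) =
      attpLmul K A B R b₁ (R (b₂ ⊗ₜ[K] a)) := by
  simp only [braidL, coe_comp, Function.comp_apply, LinearEquiv.coe_coe, lTensor_tmul]
  induction R (b₂ ⊗ₜ[K] a) using TensorProduct.induction_on with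
  | zero => simp
  | add u v hu hv => simp only [tmul_add, map_add, hu, hv]
  | tmul u v =>
    rw [attpLmul_tmul, assoc_symm_tmul, rTensor_tmul]
    induction R (b₁ ⊗ₜ[K] u) using TensorProduct.induction_on with
    | zero => simp
    | add s t hs ht => simp only [add_tmul, map_add, hs, ht]
    | tmul c d => simp [mul'_apply]

namespace IsAltMul

variable [SMulCommClass K A A] (hm : IsAltMul K A B A₀ R m)
include hm

theorem lTensor_mul'_braidR_tmul (b₁ b₂ : B) (a : A) :
    lTensor A (mul' K B) (braidR K A B R (b₁ ⊗ₜ[K] (b₂ ⊗ₜ[K] a))) =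
      m ((1 : A) ⊗ₜ[K] b₂) (R (b₁ ⊗ₜ[K] a)) := by
  simp only [braidR, coe_comp, Function.comp_apply, LinearEquiv.coe_coe, assoc_symm_tmul,
    rTensor_tmul, comm_tmul, assoc_tmul, lTensor_tmul]
  induction R (b₁ ⊗ₜ[K] a) using TensorProduct.induction_on with
  | zero => simp
  | add u v hu hv => simp only [tmul_add, map_add, hu, hv]
  | tmul e f =>
    rw [hm.1, assoc_symm_tmul, rTensor_tmul]
    induction R (b₂ ⊗ₜ[K] e) using TensorProduct.induction_on with
    | zero => simp
    | add s t hs ht => simp only [add_tmul, map_add, hs, ht]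
    | tmul c d => simp [mul'_apply]

theorem attpLmul_eq_one_tmul_mul (hbraid : braidL K A B R = braidR K A B R)
    (b₁ b₂ : B) (a : A) :
    attpLmul K A B R b₁ (R (b₂ ⊗ₜ[K] a)) = m ((1 : A) ⊗ₜ[K] b₂) (R (b₁ ⊗ₜ[K] a)) := by
  rw [← lTensor_mul'_braidL_tmul, hbraid, hm.lTensor_mul'_braidR_tmul]

theorem tmul_mul {u : A} (hu : u ∈ A₀) (v : B) (w : A ⊗[K] B) :
    m (u ⊗ₜ[K] v) w = rTensor B (mulLeft K u) (attpLmul K A B R v w) := by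
  induction w using TensorProduct.induction_on with
  | zero => simp
  | add s t hs ht => simp only [map_add, hs, ht]
  | tmul e f => rw [hm.2 u hu v e f, attpLmul_tmul, ← rTensor_comp_lTensor, coe_comp,
      Function.comp_apply]

variable [IsScalarTower K A A] (hR : IsAltTwistingMap K A B A₀ R)
include hR

theorem one_tmul_mul_one_tmul (b b' : B) :
    m ((1 : A) ⊗ₜ[K] b) ((1 : A) ⊗ₜ[K] b') = (1 : A) ⊗ₜ[K] (b * b') := by
  rw [hm.1, hR.2.1, lTensor_tmul, mulRight_apply]

theorem tmul_one_mul {a : A} (ha : a ∈ A₀) (w : A ⊗[K] B) :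
    m (a ⊗ₜ[K] (1 : B)) w = rTensor B (mulLeft K a) w := by
  rw [hm.tmul_mul ha]
  induction w using TensorProduct.induction_on with
  | zero => simp
  | add s t hs ht => simp only [map_add, hs, ht]
  | tmul e f => rw [attpLmul_tmul, hR.1, lTensor_tmul, mulLeft_apply, mul_one]

theorem rTensor_subtype_mul_one_tmul (z : A₀ ⊗[K] B) (b' : B) :
    m (rTensor B A₀.subtype z) ((1 : A) ⊗ₜ[K] b') =
      lTensor A (mulLeft K b') (rTensor B A₀.subtype z) := by
  induction z using TensorProduct.induction_on with
  | zero => simp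
  | add u v hu hv => simp only [map_add, LinearMap.add_apply, hu, hv]
  | tmul u v => simp [hm.2 _ u.2, hR.2.1]

theorem lTensor_mulRight_mul_tmul_one (z : A₀ ⊗[K] B) (β : B) {α : A} (hα : α ∈ A₀) :
    m (lTensor A (mulRight K β) (rTensor B A₀.subtype z)) (α ⊗ₜ[K] (1 : B)) =
      m (rTensor B A₀.subtype z) (R (β ⊗ₜ[K] α)) := by
  induction z using TensorProduct.induction_on with
  | zero => simp
  | add s t hs ht => simp only [map_add, LinearMap.add_apply, hs, ht]
  | tmul u v =>
    rw [rTensor_tmul, lTensor_tmul, mulRight_apply, hm.2 (A₀.subtype u) u.2, mulLeft_one,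
      ← rTensor, hR.2.2.2 α hα, hm.tmul_mul (u := A₀.subtype u) u.2]

theorem tmul_mul_tmul_eq_tmul_one_mul {a : A} (ha : a ∈ A₀) (b : B) {a' : A} (b' : B)
    (h : R (b ⊗ₜ[K] a') ∈ LinearMap.range (rTensor B A₀.subtype)) :
    m (a ⊗ₜ[K] b) (a' ⊗ₜ[K] b') =
      m (a ⊗ₜ[K] (1 : B)) (m (R (b ⊗ₜ[K] a')) ((1 : A) ⊗ₜ[K] b')) := by
  obtain ⟨z, hz⟩ := h
  rw [hm.2 a ha, ← rTensor_comp_lTensor, coe_comp, Function.comp_apply, hm.tmul_one_mul hR ha,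
    ← hz, hm.rTensor_subtype_mul_one_tmul hR]

end IsAltMul

end AltTwisted

section LiftedInvol

variable {K : Type*} [Field K]
variable {A : Type*} [NonAssocRing A] [Module K A] [SMulCommClass K A A] [IsScalarTower K A A]
variable {B : Type*} [NonAssocRing B] [Module K B] [SMulCommClass K B B] [IsScalarTower K B B]
variable {A₀ : Submodule K A} {R : B ⊗[K] A →ₗ[K] A ⊗[K] B}
variable {m : A ⊗[K] B →ₗ[K] A ⊗[K] B →ₗ[K] A ⊗[K] B} {σA : A →ₗ[K] A} {σB : B →ₗ[K] B}

local notation "σ̄" => liftedInvol K A B R σA σB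

theorem liftedInvol_tmul (a : A) (b : B) : σ̄ (a ⊗ₜ[K] b) = R (σB b ⊗ₜ[K] σA a) := by
  simp [liftedInvol]

theorem liftedInvol_one_tmul (hR : IsAltTwistingMap K A B A₀ R) (hσAone : σA 1 = 1) (b : B) :
    σ̄ ((1 : A) ⊗ₜ[K] b) = (1 : A) ⊗ₜ[K] σB b := by
  rw [liftedInvol_tmul, hσAone, hR.2.1]

theorem liftedInvol_tmul_one (hR : IsAltTwistingMap K A B A₀ R) (hσBone : σB 1 = 1) (a : A) :
    σ̄ (a ⊗ₜ[K] (1 : B)) = σA a ⊗ₜ[K] (1 : B) := by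
  rw [liftedInvol_tmul, hσBone, hR.1]

theorem liftedInvol_R (hσAinv : ∀ x : A, σA (σA x) = x) (hσBinv : ∀ x : B, σB (σB x) = x)
    (hsq : ∀ x : A ⊗[K] B, σ̄ (σ̄ x) = x) (a : A) (b : B) :
    σ̄ (R (b ⊗ₜ[K] a)) = σA a ⊗ₜ[K] σB b := by
  simpa only [liftedInvol_tmul, hσAinv, hσBinv] using hsq (σA a ⊗ₜ[K] σB b)

theorem liftedInvol_rTensor_mulLeft (hR : IsAltTwistingMap K A B A₀ R)
    (hσAmul : ∀ x y : A, σA (x * y) = σA y * σA x) (a : A) (t : A ⊗[K] B) :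
    σ̄ (rTensor B (mulLeft K a) t) = attpRmul K A B R (σA a) (σ̄ t) := by
  induction t using TensorProduct.induction_on with
  | zero => simp
  | add s t hs ht => simp only [map_add, hs, ht]
  | tmul c d => rw [rTensor_tmul, mulLeft_apply, liftedInvol_tmul, liftedInvol_tmul, hσAmul,
      hR.2.2.1]

/-- On `A₀ ⊗ B` this is the braid relation, read through `σ_A(A₀) ⊆ A₀`. -/
theorem liftedInvol_mul_one_tmul (hdec : Codisjoint (K ∙ (1 : A)) A₀)
    (hR : IsAltTwistingMap K A B A₀ R) (hm : IsAltMul K A B A₀ R m)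
    (hbraid : braidL K A B R = braidR K A B R) (hσAone : σA 1 = 1)
    (hσBmul : ∀ x y : B, σB (x * y) = σB y * σB x) (hσA0 : ∀ a ∈ A₀, σA a ∈ A₀)
    (x : A ⊗[K] B) (b' : B) :
    σ̄ (m x ((1 : A) ⊗ₜ[K] b')) = m (σ̄ ((1 : A) ⊗ₜ[K] b')) (σ̄ x) := by
  induction x using TensorProduct.induction_on_codisjoint hdec with
  | tmul_left b =>
    simp only [hm.one_tmul_mul_one_tmul hR, liftedInvol_one_tmul hR hσAone, hσBmul]
  | tmul_mem z hz b =>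
    have hprod : m (z ⊗ₜ[K] b) ((1 : A) ⊗ₜ[K] b') = z ⊗ₜ[K] (b' * b) := by
      simp [hm.2 z hz, hR.2.1]
    rw [hprod, liftedInvol_tmul, hσBmul, hR.2.2.2 _ (hσA0 z hz),
      hm.attpLmul_eq_one_tmul_mul hbraid, liftedInvol_one_tmul hR hσAone, liftedInvol_tmul]
  | add x y hx hy => simp only [map_add, LinearMap.add_apply, hx, hy]

theorem liftedInvol_mul_tmul_one (hdec : Codisjoint (K ∙ (1 : A)) A₀)
    (hR : IsAltTwistingMap K A B A₀ R) (hm : IsAltMul K A B A₀ R m)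
    (hσAmul : ∀ x y : A, σA (x * y) = σA y * σA x) (hσAone : σA 1 = 1)
    (hσAinv : ∀ x : A, σA (σA x) = x) (hσBone : σB 1 = 1) (hσBinv : ∀ x : B, σB (σB x) = x)
    (hσA0 : ∀ a ∈ A₀, σA a ∈ A₀) (hsq : ∀ x : A ⊗[K] B, σ̄ (σ̄ x) = x)
    (x : A ⊗[K] B) {a' : A} (ha' : a' ∈ A₀) :
    σ̄ (m x (a' ⊗ₜ[K] (1 : B))) = m (σ̄ (a' ⊗ₜ[K] (1 : B))) (σ̄ x) := by
  rw [liftedInvol_tmul_one hR hσBone, hm.tmul_one_mul hR (hσA0 a' ha')]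
  induction x using TensorProduct.induction_on_codisjoint hdec with
  | tmul_left b =>
    rw [hm.1, mulRight_one, lTensor_id, LinearMap.id_apply, liftedInvol_R hσAinv hσBinv hsq,
      liftedInvol_one_tmul hR hσAone, rTensor_tmul, mulLeft_apply, mul_one]
  | tmul_mem z hz b =>
    rw [hm.2 z hz, mulLeft_one, ← rTensor, liftedInvol_rTensor_mulLeft hR hσAmul,
      liftedInvol_R hσAinv hσBinv hsq, attpRmul_tmul, liftedInvol_tmul]
  | add x y hx hy => simp only [map_add, LinearMap.add_apply, hx, hy]

theorem liftedInvol_one_tmul_mul (hdec : Codisjoint (K ∙ (1 : A)) A₀)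
    (hR : IsAltTwistingMap K A B A₀ R) (hm : IsAltMul K A B A₀ R m)
    (hbraid : braidL K A B R = braidR K A B R) (hσAone : σA 1 = 1)
    (hσBmul : ∀ x y : B, σB (x * y) = σB y * σB x) (hσBinv : ∀ x : B, σB (σB x) = x)
    (hσA0 : ∀ a ∈ A₀, σA a ∈ A₀) (hsq : ∀ x : A ⊗[K] B, σ̄ (σ̄ x) = x) (b : B) (y : A ⊗[K] B) :
    σ̄ (m ((1 : A) ⊗ₜ[K] b) y) = m (σ̄ y) (σ̄ ((1 : A) ⊗ₜ[K] b)) := by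
  have h := Function.Involutive.map_mul_left_of_map_mul_right hsq (fun x y ↦ m x y)
    ((1 : A) ⊗ₜ[K] σB b)
    (fun x ↦ liftedInvol_mul_one_tmul hdec hR hm hbraid hσAone hσBmul hσA0 x (σB b)) y
  rwa [liftedInvol_one_tmul hR hσAone, hσBinv] at h

theorem liftedInvol_tmul_one_mul (hdec : Codisjoint (K ∙ (1 : A)) A₀)
    (hR : IsAltTwistingMap K A B A₀ R) (hm : IsAltMul K A B A₀ R m)
    (hσAmul : ∀ x y : A, σA (x * y) = σA y * σA x) (hσAone : σA 1 = 1)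
    (hσAinv : ∀ x : A, σA (σA x) = x) (hσBone : σB 1 = 1) (hσBinv : ∀ x : B, σB (σB x) = x)
    (hσA0 : ∀ a ∈ A₀, σA a ∈ A₀) (hsq : ∀ x : A ⊗[K] B, σ̄ (σ̄ x) = x)
    {a : A} (ha : a ∈ A₀) (y : A ⊗[K] B) :
    σ̄ (m (a ⊗ₜ[K] (1 : B)) y) = m (σ̄ y) (σ̄ (a ⊗ₜ[K] (1 : B))) := by
  have h := Function.Involutive.map_mul_left_of_map_mul_right hsq (fun x y ↦ m x y)
    (σA a ⊗ₜ[K] (1 : B))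
    (fun x ↦ liftedInvol_mul_tmul_one hdec hR hm hσAmul hσAone hσAinv hσBone hσBinv hσA0 hsq x
      (hσA0 a ha)) y
  rwa [liftedInvol_tmul_one hR hσBone, hσAinv] at h

theorem liftedInvol_tmul_mul_tmul (hdec : Codisjoint (K ∙ (1 : A)) A₀)
    (hR : IsAltTwistingMap K A B A₀ R) (hm : IsAltMul K A B A₀ R m)
    (hσAmul : ∀ x y : A, σA (x * y) = σA y * σA x) (hσAone : σA 1 = 1)
    (hσAinv : ∀ x : A, σA (σA x) = x)
    (hσBmul : ∀ x y : B, σB (x * y) = σB y * σB x) (hσBone : σB 1 = 1)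
    (hσBinv : ∀ x : B, σB (σB x) = x) (hbraid : braidL K A B R = braidR K A B R)
    (hR0 : Submodule.map R (LinearMap.range (lTensor B A₀.subtype)) ≤
      LinearMap.range (rTensor B A₀.subtype))
    (hσA0 : ∀ a ∈ A₀, σA a ∈ A₀) (hsq : ∀ x : A ⊗[K] B, σ̄ (σ̄ x) = x)
    {a a' : A} (ha : a ∈ A₀) (ha' : a' ∈ A₀) (b b' : B) :
    σ̄ (m (a ⊗ₜ[K] b) (a' ⊗ₜ[K] b')) = m (σ̄ (a' ⊗ₜ[K] b')) (σ̄ (a ⊗ₜ[K] b)) := by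
  obtain ⟨z, hz⟩ := mem_range_rTensor_of_map_le hR0 (σB b') (hσA0 a' ha')
  calc σ̄ (m (a ⊗ₜ[K] b) (a' ⊗ₜ[K] b'))
      = σ̄ (m (a ⊗ₜ[K] (1 : B)) (m (R (b ⊗ₜ[K] a')) ((1 : A) ⊗ₜ[K] b'))) := by
        rw [hm.tmul_mul_tmul_eq_tmul_one_mul hR ha b b'
          (mem_range_rTensor_of_map_le hR0 b ha')]
    _ = m (m ((1 : A) ⊗ₜ[K] σB b') (σA a' ⊗ₜ[K] σB b)) (σA a ⊗ₜ[K] (1 : B)) := by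
        rw [liftedInvol_tmul_one_mul hdec hR hm hσAmul hσAone hσAinv hσBone hσBinv hσA0 hsq ha,
          liftedInvol_mul_one_tmul hdec hR hm hbraid hσAone hσBmul hσA0,
          liftedInvol_R hσAinv hσBinv hsq, liftedInvol_one_tmul hR hσAone,
          liftedInvol_tmul_one hR hσBone]
    _ = m (lTensor A (mulRight K (σB b)) (rTensor B A₀.subtype z)) (σA a ⊗ₜ[K] (1 : B)) := by
        rw [hm.1, hz]
    _ = m (σ̄ (a' ⊗ₜ[K] b')) (σ̄ (a ⊗ₜ[K] b)) := by
        rw [hm.lTensor_mulRight_mul_tmul_one hR z _ (hσA0 a ha), hz, liftedInvol_tmul,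
          liftedInvol_tmul]

end LiftedInvol

/-- under the braid relation, `R(B⊗A₀) ⊆ A₀⊗B`, `σ_A(A₀) ⊆ A₀` and
`σ̄² = id`, the map `σ̄ = R ∘ (σ_B ⊗ σ_A) ∘ τ_{A,B}` is an involution of the algebra
`A ⊗̄_R B`: an antiautomorphism squaring to the identity and fixing the unit. -/
theorem stmt10 (K A B : Type*) [Field K]
    [NonAssocRing A] [Module K A] [SMulCommClass K A A] [IsScalarTower K A A]
    [NonAssocRing B] [Module K B] [SMulCommClass K B B] [IsScalarTower K B B]
    (A₀ : Submodule K A) (hdec : IsCompl (Submodule.span K {(1 : A)}) A₀)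
    (R : B ⊗[K] A →ₗ[K] A ⊗[K] B) (hR : IsAltTwistingMap K A B A₀ R)
    (m : A ⊗[K] B →ₗ[K] A ⊗[K] B →ₗ[K] A ⊗[K] B) (hm : IsAltMul K A B A₀ R m)
    (σA : A →ₗ[K] A) (hσAmul : ∀ x y : A, σA (x * y) = σA y * σA x)
    (hσAone : σA 1 = 1) (hσAinv : ∀ x : A, σA (σA x) = x)
    (σB : B →ₗ[K] B) (hσBmul : ∀ x y : B, σB (x * y) = σB y * σB x)
    (hσBone : σB 1 = 1) (hσBinv : ∀ x : B, σB (σB x) = x)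
    (hbraid : braidL K A B R = braidR K A B R)
    (hR0 : Submodule.map R (LinearMap.range (lTensor B A₀.subtype)) ≤
      LinearMap.range (rTensor B A₀.subtype))
    (hσA0 : ∀ a ∈ A₀, σA a ∈ A₀)
    (hsq : ∀ x : A ⊗[K] B, liftedInvol K A B R σA σB (liftedInvol K A B R σA σB x) = x) :
    (∀ x y : A ⊗[K] B,
        liftedInvol K A B R σA σB (m x y) =
          m (liftedInvol K A B R σA σB y) (liftedInvol K A B R σA σB x)) ∧
    liftedInvol K A B R σA σB ((1 : A) ⊗ₜ[K] (1 : B)) = (1 : A) ⊗ₜ[K] (1 : B) ∧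
    (∀ x : A ⊗[K] B, liftedInvol K A B R σA σB (liftedInvol K A B R σA σB x) = x) := by
  refine ⟨fun x y ↦ ?_, by rw [liftedInvol_one_tmul hR hσAone, hσBone], hsq⟩
  have hspan := hdec.codisjoint
  induction y using TensorProduct.induction_on_codisjoint hspan with
  | tmul_left b' => exact liftedInvol_mul_one_tmul hspan hR hm hbraid hσAone hσBmul hσA0 x b'
  | tmul_mem a' ha' b' =>
    induction x using TensorProduct.induction_on_codisjoint hspan with
    | tmul_left b =>
      exact liftedInvol_one_tmul_mul hspan hR hm hbraid hσAone hσBmul hσBinv hσA0 hsq b _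
    | tmul_mem a ha b =>
      exact liftedInvol_tmul_mul_tmul hspan hR hm hσAmul hσAone hσAinv hσBmul hσBone hσBinv
        hbraid hR0 hσA0 hsq ha ha' b b'
    | add x₁ x₂ h₁ h₂ => simp only [map_add, LinearMap.add_apply, h₁, h₂]
  | add y₁ y₂ h₁ h₂ => simp only [map_add, LinearMap.add_apply, h₁, h₂]
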